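/- For every integer k ≥ 1 and all u, v, z ∈ ℂ with u−v, u−z and v−z all nonzero, the transposed Yang–Baxter equation holds: R₁₂(u−v)·R̃₂₃(v−z)·R̃₁₃(u−z) = R̃₁₃(u−z)·R̃₂₃(v−z)·R₁₂(u−v) as linear operators on ℂ^k⊗ℂ^k⊗ℂ^k. -/
import Mathlib


open scoped BigOperators Classical

noncomputable section

namespace TY

/-- The permutation operator `P` on `ℂ^k ⊗ ℂ^k`. -/
def Pm (k : ℕ) : Matrix (Fin k × Fin k) (Fin k × Fin k) ℂ :=
  Matrix.of fun x y => if x.1 = y.2 ∧ x.2 = y.1 then 1 else 0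

/-- The operator `Q = Σ_{i,j} E_{ij} ⊗ E_{ī j̄}` on `ℂ^k ⊗ ℂ^k`
(`ī = k - i + 1`, realised 0-based by `Fin.rev`). -/
def Qm (k : ℕ) : Matrix (Fin k × Fin k) (Fin k × Fin k) ℂ :=
  Matrix.of fun x y => if x.2 = x.1.rev ∧ y.2 = y.1.rev then 1 else 0

/-- Yang's R-matrix `R(u) = I - u⁻¹ P` on `ℂ^k ⊗ ℂ^k`. -/
def Rm (k : ℕ) (c : ℂ) : Matrix (Fin k × Fin k) (Fin k × Fin k) ℂ := 1 - c⁻¹ • Pm k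

/-- The partially transposed R-matrix `R̃(u) = I - u⁻¹ Q`. -/
def Rtm (k : ℕ) (c : ℂ) : Matrix (Fin k × Fin k) (Fin k × Fin k) ℂ := 1 - c⁻¹ • Qm k

/-- An operator on the first two factors of `ℂ^k ⊗ ℂ^k ⊗ ℂ^k`. -/
def op12 (k : ℕ) (M : Matrix (Fin k × Fin k) (Fin k × Fin k) ℂ) :
    Matrix (Fin k × Fin k × Fin k) (Fin k × Fin k × Fin k) ℂ :=
  Matrix.of fun x y => M (x.1, x.2.1) (y.1, y.2.1) * (if x.2.2 = y.2.2 then 1 else 0)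

/-- An operator on the first and third factors of `ℂ^k ⊗ ℂ^k ⊗ ℂ^k`. -/
def op13 (k : ℕ) (M : Matrix (Fin k × Fin k) (Fin k × Fin k) ℂ) :
    Matrix (Fin k × Fin k × Fin k) (Fin k × Fin k × Fin k) ℂ :=
  Matrix.of fun x y => M (x.1, x.2.2) (y.1, y.2.2) * (if x.2.1 = y.2.1 then 1 else 0)

/-- An operator on the last two factors of `ℂ^k ⊗ ℂ^k ⊗ ℂ^k`. -/
def op23 (k : ℕ) (M : Matrix (Fin k × Fin k) (Fin k × Fin k) ℂ) :
    Matrix (Fin k × Fin k × Fin k) (Fin k × Fin k × Fin k) ℂ :=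
  Matrix.of fun x y => M (x.2.1, x.2.2) (y.2.1, y.2.2) * (if x.1 = y.1 then 1 else 0)

def P12 (k : ℕ) := op12 k (Pm k)
def Q13 (k : ℕ) := op13 k (Qm k)
def Q23 (k : ℕ) := op23 k (Qm k)

def Am (k : ℕ) : Matrix (Fin k × Fin k × Fin k) (Fin k × Fin k × Fin k) ℂ :=
  Matrix.of fun x y =>
    if x.2.2 = x.1.rev ∧ x.2.1 = y.1 ∧ y.2.2 = y.2.1.rev then 1 else 0
def Bm (k : ℕ) : Matrix (Fin k × Fin k × Fin k) (Fin k × Fin k × Fin k) ℂ :=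
  Matrix.of fun x y =>
    if x.2.2 = x.2.1.rev ∧ x.1 = y.2.1 ∧ y.2.2 = y.1.rev then 1 else 0
def Cm (k : ℕ) : Matrix (Fin k × Fin k × Fin k) (Fin k × Fin k × Fin k) ℂ :=
  Matrix.of fun x y =>
    if x.2.2 = x.1.rev ∧ x.2.1 = y.2.1 ∧ y.2.2 = y.1.rev then 1 else 0

lemma P12_mul (k : ℕ) (M : Matrix (Fin k × Fin k × Fin k) (Fin k × Fin k × Fin k) ℂ) :
    P12 k * M = Matrix.of fun x y => M (x.2.1, x.1, x.2.2) y := by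
  ext x y
  rw [Matrix.mul_apply, Finset.sum_eq_single (x.2.1, x.1, x.2.2)]
  · simp [P12, op12, Pm]
  · rintro ⟨m1, m2, m3⟩ _ hm
    simp only [P12, op12, Pm, Matrix.of_apply, mul_ite, ite_mul, one_mul, zero_mul, mul_one]
    aesop
  · simp

lemma mul_P12 (k : ℕ) (M : Matrix (Fin k × Fin k × Fin k) (Fin k × Fin k × Fin k) ℂ) :
    M * P12 k = Matrix.of fun x y => M x (y.2.1, y.1, y.2.2) := by
  ext x y
  rw [Matrix.mul_apply, Finset.sum_eq_single (y.2.1, y.1, y.2.2)]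
  · simp [P12, op12, Pm]
  · rintro ⟨m1, m2, m3⟩ _ hm
    simp only [P12, op12, Pm, Matrix.of_apply, mul_ite, ite_mul, one_mul, zero_mul, mul_one]
    aesop
  · simp

lemma Q13_mul_Q23 (k : ℕ) : Q13 k * Q23 k = Am k := by
  ext x y
  rw [Matrix.mul_apply, Finset.sum_eq_single (y.1, x.2.1, (y.1).rev)]
  · simp only [Q13, Q23, op13, op23, Qm, Am, Matrix.of_apply, mul_ite, ite_mul,
      one_mul, zero_mul, mul_one, mul_zero]
    aesop (add simp [Fin.rev_inj])
  · rintro ⟨m1, m2, m3⟩ _ hm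
    simp only [Q13, Q23, op13, op23, Qm, Matrix.of_apply, mul_ite, ite_mul,
      one_mul, zero_mul, mul_one, mul_zero]
    aesop
  · simp

lemma Q23_mul_Q13 (k : ℕ) : Q23 k * Q13 k = Bm k := by
  ext x y
  rw [Matrix.mul_apply, Finset.sum_eq_single (x.1, y.2.1, (y.2.1).rev)]
  · simp only [Q13, Q23, op13, op23, Qm, Bm, Matrix.of_apply, mul_ite, ite_mul,
      one_mul, zero_mul, mul_one, mul_zero]
    aesop (add simp [Fin.rev_inj])
  · rintro ⟨m1, m2, m3⟩ _ hm
    simp only [Q13, Q23, op13, op23, Qm, Matrix.of_apply, mul_ite, ite_mul,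
      one_mul, zero_mul, mul_one, mul_zero]
    aesop
  · simp

lemma Am_mul_Q13 (k : ℕ) : Am k * Q13 k = Cm k := by
  ext x y
  rw [Matrix.mul_apply, Finset.sum_eq_single (x.2.1, y.2.1, (y.2.1).rev)]
  · simp only [Q13, op13, Qm, Am, Cm, Matrix.of_apply, mul_ite, ite_mul,
      one_mul, zero_mul, mul_one, mul_zero]
    aesop (add simp [Fin.rev_inj])
  · rintro ⟨m1, m2, m3⟩ _ hm
    simp only [Q13, op13, Qm, Am, Matrix.of_apply, mul_ite, ite_mul,
      one_mul, zero_mul, mul_one, mul_zero]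
    aesop
  · simp

lemma P12_mul_Q23 (k : ℕ) : P12 k * Q23 k = Am k := by
  rw [P12_mul]; ext x y
  simp only [Q23, op23, Qm, Am, Matrix.of_apply, mul_ite, ite_mul, one_mul, zero_mul, mul_one]
  aesop

lemma P12_mul_Q13 (k : ℕ) : P12 k * Q13 k = Bm k := by
  rw [P12_mul]; ext x y
  simp only [Q13, op13, Qm, Bm, Matrix.of_apply, mul_ite, ite_mul, one_mul, zero_mul, mul_one]
  aesop

lemma Q23_mul_P12 (k : ℕ) : Q23 k * P12 k = Bm k := by
  rw [mul_P12]; ext x y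
  simp only [Q23, op23, Qm, Bm, Matrix.of_apply, mul_ite, ite_mul, one_mul, zero_mul, mul_one]
  aesop

lemma Q13_mul_P12 (k : ℕ) : Q13 k * P12 k = Am k := by
  rw [mul_P12]; ext x y
  simp only [Q13, op13, Qm, Am, Matrix.of_apply, mul_ite, ite_mul, one_mul, zero_mul, mul_one]
  aesop

lemma Am_mul_P12 (k : ℕ) : Am k * P12 k = Cm k := by
  rw [mul_P12]; ext x y
  simp only [Am, Cm, Matrix.of_apply, mul_ite, ite_mul, one_mul, zero_mul, mul_one]

lemma op12_Rm (k : ℕ) (c : ℂ) : op12 k (Rm k c) = 1 - c⁻¹ • P12 k := by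
  ext x y
  simp only [op12, Rm, P12, Matrix.of_apply, Matrix.sub_apply, Matrix.smul_apply,
    Matrix.one_apply, Prod.ext_iff, smul_eq_mul, sub_mul, mul_ite, ite_mul,
    one_mul, mul_one, zero_mul, mul_zero]
  aesop

lemma op13_Rtm (k : ℕ) (c : ℂ) : op13 k (Rtm k c) = 1 - c⁻¹ • Q13 k := by
  ext x y
  simp only [op13, Rtm, Q13, Qm, Matrix.of_apply, Matrix.sub_apply, Matrix.smul_apply,
    Matrix.one_apply, Prod.ext_iff, smul_eq_mul, sub_mul, mul_ite, ite_mul,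
    one_mul, mul_one, zero_mul, mul_zero]
  aesop

lemma op23_Rtm (k : ℕ) (c : ℂ) : op23 k (Rtm k c) = 1 - c⁻¹ • Q23 k := by
  ext x y
  simp only [op23, Rtm, Q23, Qm, Matrix.of_apply, Matrix.sub_apply, Matrix.smul_apply,
    Matrix.one_apply, Prod.ext_iff, smul_eq_mul, sub_mul, mul_ite, ite_mul,
    one_mul, mul_one, zero_mul, mul_zero]
  aesop


/-- the transposed Yang–Baxter equation
`R₁₂(u−v)·R̃₂₃(v−z)·R̃₁₃(u−z) = R̃₁₃(u−z)·R̃₂₃(v−z)·R₁₂(u−v)`. -/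
theorem transposed_yang_baxter_equation (k : ℕ) (hk : 1 ≤ k) (u v z : ℂ)
    (huv : u - v ≠ 0) (huz : u - z ≠ 0) (hvz : v - z ≠ 0) :
    op12 k (Rm k (u - v)) * op23 k (Rtm k (v - z)) * op13 k (Rtm k (u - z)) =
      op13 k (Rtm k (u - z)) * op23 k (Rtm k (v - z)) * op12 k (Rm k (u - v)) := by
  rw [op12_Rm, op13_Rtm, op23_Rtm]
  simp only [sub_mul, mul_sub, mul_one, one_mul, smul_mul_assoc, mul_smul_comm, smul_smul,
    P12_mul_Q23, P12_mul_Q13, Q23_mul_Q13, Q13_mul_Q23, Q13_mul_P12, Q23_mul_P12,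
    Am_mul_Q13, Am_mul_P12]
  match_scalars <;> field_simp <;> ring

end TY
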